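/- Let y ∈ ℝ³ with 0 < ‖y‖ < 1 and let M be a symmetric positive semidefinite 3×3 matrix such that y is an eigenvector of M for its largest eigenvalue. Then the maximum over unit vectors n̂ of f(n̂) = 4 n̂ᵗ M n̂ / (1 − (y·n̂)²)² is attained at n̂ = y/‖y‖, and equals 4 yᵗ M y / (‖y‖² (1 − ‖y‖²)²). -/

import Mathlib

/-!
For a unit vector `n`, the numerator `nᵗ M n` is at most the largest eigenvalue `L` of `M`
(because `L • 1 - M` is positive semidefinite), and `(y ⬝ n)² ≤ ‖y‖²` by Cauchy–Schwarz, so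
`f n ≤ 4 L / (1 - ‖y‖²)²`, using `L ≥ 0`. Since `y` is an `L`-eigenvector, both bounds are
equalities at `n = y / ‖y‖`.
-/

open Matrix Complex Kronecker
open scoped ComplexOrder

noncomputable section

def pauli (i : Fin 3) : Matrix (Fin 2) (Fin 2) ℂ :=
  if i = 0 then !![0, 1; 1, 0]
  else if i = 1 then !![0, -I; I, 0]
  else !![1, 0; 0, -1]

def dotsigma (x : Fin 3 → ℝ) : Matrix (Fin 2) (Fin 2) ℂ :=
  ∑ i, (x i : ℂ) • pauli i

def dot3 (x y : Fin 3 → ℝ) : ℝ := ∑ i, x i * y i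

def norm3 (x : Fin 3 → ℝ) : ℝ := Real.sqrt (∑ i, (x i) ^ 2)

def trB (A : Matrix (Fin 2 × Fin 2) (Fin 2 × Fin 2) ℂ) : Matrix (Fin 2) (Fin 2) ℂ :=
  Matrix.of fun i j => ∑ k, A (i, k) (j, k)

def trA (A : Matrix (Fin 2 × Fin 2) (Fin 2 × Fin 2) ℂ) : Matrix (Fin 2) (Fin 2) ℂ :=
  Matrix.of fun i j => ∑ k, A (k, i) (k, j)


section

open Finset Unitary

namespace Matrix.IsHermitian

variable {𝕜 n : Type*} [RCLike 𝕜] [Fintype n] [DecidableEq n] [Nonempty n] {A : Matrix n n 𝕜}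

/- Conjugating by the eigenvector unitary turns `L • 1 - A` into the diagonal matrix of the
gaps `L - λᵢ`. -/
theorem posSemidef_sup_eigenvalues_smul_one_sub (hA : A.IsHermitian) :
    ((univ.sup' univ_nonempty hA.eigenvalues) • (1 : Matrix n n 𝕜) - A).PosSemidef := by
  set L := univ.sup' univ_nonempty hA.eigenvalues
  have hdiag : L • (1 : Matrix n n 𝕜) - diagonal (RCLike.ofReal ∘ hA.eigenvalues) =
      diagonal fun i ↦ ((L - hA.eigenvalues i : ℝ) : 𝕜) := by
    ext i j
    by_cases h : i = j <;> simp [h, RCLike.real_smul_eq_coe_mul]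
  have hconj : L • (1 : Matrix n n 𝕜) - A = conjStarAlgAut 𝕜 _ hA.eigenvectorUnitary
      (diagonal fun i ↦ ((L - hA.eigenvalues i : ℝ) : 𝕜)) := by
    rw [← hdiag, RCLike.real_smul_eq_coe_smul (K := 𝕜), map_sub, map_smul, map_one,
      ← hA.spectral_theorem]
  rw [hconj, conjStarAlgAut_apply, isUnit_coe.posSemidef_star_right_conjugate_iff,
    posSemidef_diagonal_iff]
  intro i
  simpa using le_sup' hA.eigenvalues (mem_univ i)

end Matrix.IsHermitian

theorem Matrix.PosSemidef.sup_eigenvalues_nonneg {𝕜 n : Type*} [RCLike 𝕜] [Fintype n]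
    [DecidableEq n] [Nonempty n] {A : Matrix n n 𝕜} (hA : A.PosSemidef) :
    0 ≤ univ.sup' univ_nonempty hA.isHermitian.eigenvalues :=
  (hA.eigenvalues_nonneg (Classical.arbitrary n)).trans (le_sup' _ (mem_univ _))

variable {n : Type*} [Fintype n]

theorem Matrix.IsHermitian.dotProduct_mulVec_le_sup_eigenvalues_mul [DecidableEq n] [Nonempty n]
    {A : Matrix n n ℝ} (hA : A.IsHermitian) (x : n → ℝ) :
    x ⬝ᵥ A *ᵥ x ≤ univ.sup' univ_nonempty hA.eigenvalues * (x ⬝ᵥ x) := by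
  have h := hA.posSemidef_sup_eigenvalues_smul_one_sub.dotProduct_mulVec_nonneg x
  simp only [star_trivial, sub_mulVec, smul_mulVec, one_mulVec, dotProduct_sub,
    dotProduct_smul, smul_eq_mul] at h
  linarith

theorem dotProduct_sq_le_mul (x y : n → ℝ) : (x ⬝ᵥ y) ^ 2 ≤ (x ⬝ᵥ x) * (y ⬝ᵥ y) := by
  simpa only [dotProduct, sq] using sum_mul_sq_le_sq_mul_sq univ x y

theorem div_one_sub_dotProduct_sq_le [DecidableEq n] [Nonempty n] {A : Matrix n n ℝ}
    (hA : A.PosSemidef) {x y : n → ℝ} (hy : y ⬝ᵥ y < 1) (hx : x ⬝ᵥ x = 1) :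
    4 * (x ⬝ᵥ A *ᵥ x) / (1 - (y ⬝ᵥ x) ^ 2) ^ 2 ≤
      4 * univ.sup' univ_nonempty hA.isHermitian.eigenvalues / (1 - y ⬝ᵥ y) ^ 2 := by
  have hquad := hA.isHermitian.dotProduct_mulVec_le_sup_eigenvalues_mul x
  have hL := hA.sup_eigenvalues_nonneg
  have hcs := dotProduct_sq_le_mul y x
  rw [hx, mul_one] at hquad hcs
  have hyy_nonneg : 0 ≤ y ⬝ᵥ y := by simpa using dotProduct_self_star_nonneg y
  have hgap : 0 < 1 - y ⬝ᵥ y := by linarith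
  exact div_le_div₀ (by positivity) (by linarith) (by positivity) (by nlinarith)

variable {A : Matrix n n ℝ} {y : n → ℝ} {μ a : ℝ}

theorem div_one_sub_dotProduct_sq_eq_of_mulVec_eq_smul (hAy : A *ᵥ y = μ • y)
    (hya : y ⬝ᵥ y = a ^ 2) (ha : a ≠ 0) :
    4 * ((a⁻¹ • y) ⬝ᵥ A *ᵥ (a⁻¹ • y)) / (1 - (y ⬝ᵥ (a⁻¹ • y)) ^ 2) ^ 2 =
      4 * μ / (1 - a ^ 2) ^ 2 := by
  simp only [mulVec_smul, hAy, dotProduct_smul, smul_dotProduct, hya, smul_eq_mul]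
  field_simp

theorem div_sq_mul_one_sub_sq_eq_of_mulVec_eq_smul (hAy : A *ᵥ y = μ • y)
    (hya : y ⬝ᵥ y = a ^ 2) (ha : a ≠ 0) :
    4 * (y ⬝ᵥ A *ᵥ y) / (a ^ 2 * (1 - a ^ 2) ^ 2) = 4 * μ / (1 - a ^ 2) ^ 2 := by
  rw [hAy, dotProduct_smul, hya, smul_eq_mul]
  field_simp

end

theorem dot3_eq_dotProduct (x y : Fin 3 → ℝ) : dot3 x y = x ⬝ᵥ y := rfl

theorem dotProduct_self_eq_norm3_sq (x : Fin 3 → ℝ) : x ⬝ᵥ x = norm3 x ^ 2 := by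
  rw [norm3, Real.sq_sqrt (Finset.sum_nonneg fun i _ ↦ sq_nonneg _)]
  simp only [dotProduct, sq]

theorem stmt4 (y : Fin 3 → ℝ) (hy0 : 0 < norm3 y) (hy1 : norm3 y < 1)
    (M : Matrix (Fin 3) (Fin 3) ℝ) (hM : M.IsHermitian) (hpsd : M.PosSemidef)
    (heig : M.mulVec y = (Finset.univ.sup' Finset.univ_nonempty hM.eigenvalues) • y) :
    IsGreatest {v : ℝ | ∃ n : Fin 3 → ℝ, dot3 n n = 1 ∧
        v = 4 * dot3 n (M.mulVec n) / (1 - (dot3 y n) ^ 2) ^ 2}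
      (4 * dot3 y (M.mulVec y) / ((norm3 y) ^ 2 * (1 - (norm3 y) ^ 2) ^ 2)) ∧
    4 * dot3 ((norm3 y)⁻¹ • y) (M.mulVec ((norm3 y)⁻¹ • y)) /
        (1 - (dot3 y ((norm3 y)⁻¹ • y)) ^ 2) ^ 2 =
      4 * dot3 y (M.mulVec y) / ((norm3 y) ^ 2 * (1 - (norm3 y) ^ 2) ^ 2) := by
  have hyy := dotProduct_self_eq_norm3_sq y
  have ha : norm3 y ≠ 0 := hy0.ne'
  have hmax := div_sq_mul_one_sub_sq_eq_of_mulVec_eq_smul heig hyy ha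
  have hval := div_one_sub_dotProduct_sq_eq_of_mulVec_eq_smul heig hyy ha
  have hunit : ((norm3 y)⁻¹ • y) ⬝ᵥ ((norm3 y)⁻¹ • y) = 1 := by
    rw [smul_dotProduct, dotProduct_smul, hyy, smul_eq_mul, smul_eq_mul]
    field_simp
  have hattained := hval.trans hmax.symm
  simp only [dot3_eq_dotProduct]
  refine ⟨⟨⟨_, hunit, hattained.symm⟩, ?_⟩, hattained⟩
  rintro _ ⟨n, hn, rfl⟩
  rw [hmax, ← hyy]
  exact div_one_sub_dotProduct_sq_le hpsd (by nlinarith) hn
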